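/- arXiv:0806.0024 — 2 statements merged into one kernel-verified Lean document; each statement's English description precedes it below -/
import Mathlib

section
/- For every integer n ≥ 3 with n ≠ 4, if ω : Λ²ℂⁿ → so(n,ℂ) is an so(n,ℂ)-equivariant linear map such that the trilinear map (u, v, w) ↦ ω(u∧v)·w on ℂⁿ is totally antisymmetric, then ω = 0. In particular, for n ≠ 4 no nonzero equivariant ω on the standard representation of so(n,ℂ) defines a LATKe bracket. -/
/-!
Write `T a b c d` for the `(c, d)` entry of `ω(e_a, e_b)`. Alternation of `ω`, antisymmetry of
its values and total antisymmetry of `(u, v, w) ↦ ω(u∧v)·w` make `T` antisymmetric under the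
transpositions `(a b)`, `(c d)` and `(a d)`, which generate `S₄`; so `T` vanishes as soon as two
indices agree. If `a, b, c, d` are distinct, then `n ≥ 5` and there is a fifth index `e`;
equivariance under `X = e_{ea}` applied to `ω(e_e, e_b)` has `(c, d)` entry `0 = -T a b c d`,
since `X` moves `e_e` to `-e_a`, kills `e_b`, and `[X, ·]` cannot reach the entry `(c, d)`.
-/

open Matrix

/-- The `a`-th standard basis vector `e_a` of `ℂⁿ`. -/
noncomputable def E {n : ℕ} (a : Fin n) : Fin n → ℂ := Pi.single a 1

/-- The antisymmetric matrix `e_{ab}`: `+1` in entry `(a,b)`, `−1` in entry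
`(b,a)`, zeros elsewhere. -/
noncomputable def Eab {n : ℕ} (a b : Fin n) : Matrix (Fin n) (Fin n) ℂ :=
  Matrix.single a b 1 - Matrix.single b a 1

/-- A bilinear map `ℂⁿ × ℂⁿ → Matrix`; an alternating such map is the same
thing as a linear map on `Λ²ℂⁿ`. -/
abbrev BilMat (n : ℕ) : Type _ :=
  (Fin n → ℂ) →ₗ[ℂ] (Fin n → ℂ) →ₗ[ℂ] Matrix (Fin n) (Fin n) ℂ

/-- `so(n,ℂ)`-equivariance of a map `Λ²ℂⁿ → Matrix`:
`[X, ω(u∧v)] = ω((X·u)∧v + u∧(X·v))` for all antisymmetric `X`. -/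
def IsEquivariant {n : ℕ} (ω : BilMat n) : Prop :=
  ∀ X : Matrix (Fin n) (Fin n) ℂ, Xᵀ = -X →
    ∀ u v : Fin n → ℂ,
      X * ω u v - ω u v * X = ω (X.mulVec u) v + ω u (X.mulVec v)

lemma eq_zero_of_antisymm_of_repeated_index {ι R : Type*} [NonAssocRing R] [NoZeroDivisors R]
    [CharZero R] {T : ι → ι → ι → ι → R}
    (h12 : ∀ a b c d, T a b c d = -T b a c d)
    (h34 : ∀ a b c d, T a b c d = -T a b d c)
    (h14 : ∀ a b c d, T a b c d = -T d b c a)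
    {a b c d : ι} (h : a = b ∨ a = c ∨ a = d ∨ b = c ∨ b = d ∨ c = d) :
    T a b c d = 0 := by
  have h_ad : ∀ a b c, T a b c a = 0 := fun a b c => CharZero.eq_neg_self_iff.mp (h14 a b c a)
  have h_ac : ∀ a b d, T a b a d = 0 := fun a b d => by rw [h34, h_ad, neg_zero]
  rcases h with rfl | rfl | rfl | rfl | rfl | rfl
  · exact CharZero.eq_neg_self_iff.mp (h12 a a c d)
  · exact h_ac a b d
  · exact h_ad a b c
  · rw [h12, h_ac, neg_zero]
  · rw [h12, h_ad, neg_zero]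
  · exact CharZero.eq_neg_self_iff.mp (h34 a b c c)

lemma Fin.exists_fifth_of_ne_four {n : ℕ} (hn : n ≠ 4) {a b c d : Fin n}
    (hab : a ≠ b) (hac : a ≠ c) (had : a ≠ d) (hbc : b ≠ c) (hbd : b ≠ d) (hcd : c ≠ d) :
    ∃ e, e ≠ a ∧ e ≠ b ∧ e ≠ c ∧ e ≠ d := by
  have hcard : ({a, b, c, d} : Finset (Fin n)).card = 4 := by
    simp [Finset.card_insert_of_notMem, hab, hac, had, hbc, hbd, hcd]
  have hlt : ({a, b, c, d} : Finset (Fin n)).card < (Finset.univ : Finset (Fin n)).card := by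
    have := Finset.card_le_univ ({a, b, c, d} : Finset (Fin n))
    rw [Finset.card_univ, Fintype.card_fin] at *
    omega
  obtain ⟨e, -, he⟩ := Finset.exists_mem_notMem_of_card_lt_card hlt
  simp only [Finset.mem_insert, Finset.mem_singleton, not_or] at he
  exact ⟨e, he⟩

section StandardBasis

variable {n : ℕ}

lemma Eab_transpose (a b : Fin n) : (Eab a b)ᵀ = -Eab a b := by
  ext i j
  simp [Eab, Matrix.single, and_comm]

lemma Eab_mulVec_E_right {a b : Fin n} (hab : a ≠ b) : Eab a b *ᵥ E a = -E b := by
  ext i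
  simp [Eab, E, Matrix.mulVec_single, Matrix.single, Pi.single_apply, hab, eq_comm]

lemma Eab_mulVec_E_of_ne {a b c : Fin n} (hca : c ≠ a) (hcb : c ≠ b) : Eab a b *ᵥ E c = 0 := by
  ext i
  simp [Eab, E, Matrix.mulVec_single, Matrix.single, hca.symm, hcb.symm]

lemma Eab_mul_apply_of_ne {a b c d : Fin n} (M : Matrix (Fin n) (Fin n) ℂ)
    (hca : c ≠ a) (hcb : c ≠ b) : (Eab a b * M) c d = 0 := by
  simp [Eab, Matrix.mul_apply, Matrix.single, hca.symm, hcb.symm]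

lemma mul_Eab_apply_of_ne {a b c d : Fin n} (M : Matrix (Fin n) (Fin n) ℂ)
    (hda : d ≠ a) (hdb : d ≠ b) : (M * Eab a b) c d = 0 := by
  simp [Eab, Matrix.mul_apply, Matrix.single, hda.symm, hdb.symm]

lemma BilMat.ext_E {ω ω' : BilMat n} (h : ∀ a b, ω (E a) (E b) = ω' (E a) (E b)) : ω = ω' :=
  LinearMap.ext_basis (Pi.basisFun ℂ (Fin n)) (Pi.basisFun ℂ (Fin n)) fun a b => by
    simp only [Pi.basisFun_apply]; exact h a b

lemma IsEquivariant.apply_E_E_eq_zero {ω : BilMat n} (hω : IsEquivariant ω) {a b c d e : Fin n}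
    (hba : b ≠ a) (hea : e ≠ a) (heb : e ≠ b) (hca : c ≠ a) (hce : c ≠ e) (hda : d ≠ a)
    (hde : d ≠ e) : ω (E a) (E b) c d = 0 := by
  have h := congrFun (congrFun (hω (Eab e a) (Eab_transpose e a) (E e) (E b)) c) d
  rw [Eab_mulVec_E_right hea, Eab_mulVec_E_of_ne heb.symm hba, Matrix.sub_apply,
    Eab_mul_apply_of_ne _ hce hca, mul_Eab_apply_of_ne _ hde hda] at h
  simpa using h.symm

end StandardBasis

theorem no_latke_bracket_of_ne_four_general (n : ℕ) (h4 : n ≠ 4)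
    (ω : BilMat n)
    (halt : ∀ u : Fin n → ℂ, ω u u = 0)
    (hso : ∀ u v : Fin n → ℂ, (ω u v)ᵀ = -(ω u v))
    (hequiv : IsEquivariant ω)
    (hanti : ∀ u v w : Fin n → ℂ, (ω u v).mulVec w = -((ω w v).mulVec u)) :
    ω = 0 := by
  have h12 : ∀ a b c d, ω (E a) (E b) c d = -ω (E b) (E a) c d := fun a b c d => by
    rw [← LinearMap.IsAlt.neg halt (E a) (E b), Matrix.neg_apply, neg_neg]
  have h34 : ∀ a b c d, ω (E a) (E b) c d = -ω (E a) (E b) d c := fun a b c d =>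
    congrFun (congrFun (hso (E a) (E b)) d) c
  have h14 : ∀ a b c d, ω (E a) (E b) c d = -ω (E d) (E b) c a := fun a b c d => by
    simpa [E, Matrix.mulVec_single] using congrFun (hanti (E a) (E b) (E d)) c
  refine BilMat.ext_E fun a b => Matrix.ext fun c d => ?_
  by_cases h : a = b ∨ a = c ∨ a = d ∨ b = c ∨ b = d ∨ c = d
  · exact eq_zero_of_antisymm_of_repeated_index h12 h34 h14 h
  · push Not at h
    obtain ⟨hab, hac, had, hbc, hbd, hcd⟩ := h
    obtain ⟨e, hea, heb, hec, hed⟩ := Fin.exists_fifth_of_ne_four h4 hab hac had hbc hbd hcd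
    exact hequiv.apply_E_E_eq_zero hab.symm hea heb hac.symm hec.symm had.symm hed.symm

theorem no_latke_bracket_of_ne_four (n : ℕ) (h3 : 3 ≤ n) (h4 : n ≠ 4)
    (ω : BilMat n)
    (halt : ∀ u : Fin n → ℂ, ω u u = 0)
    (hso : ∀ u v : Fin n → ℂ, (ω u v)ᵀ = -(ω u v))
    (hequiv : IsEquivariant ω)
    (hanti : ∀ u v w : Fin n → ℂ, (ω u v).mulVec w = -((ω w v).mulVec u)) :
    ω = 0 :=
  no_latke_bracket_of_ne_four_general n h4 ω halt hso hequiv hanti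
end

section
/- Let u₁ = e₁₂+e₃₄, u₂ = −e₁₃+e₂₄, u₃ = e₁₄+e₂₃, u₄ = e₁₂−e₃₄, u₅ = e₁₃+e₂₄, u₆ = e₁₄−e₂₃ (a basis of so(4,ℂ) exhibiting the splitting sl(2,ℂ) × sl(2,ℂ), with {u₁,u₂,u₃} spanning one factor and {u₄,u₅,u₆} the other), and let φ' : Λ²ℂ⁴ → so(4,ℂ) be the map φ followed by the projection, in the basis u₁,…,u₆, that sets the u₄ and u₅ components to zero (so that the image lies in the span of {u₁,u₂,u₃,u₆} ≅ su(2)×u(1)). Then the trilinear map (u, v, w) ↦ φ'(u∧v)·w on ℂ⁴ is not totally antisymmetric: φ'(e₁∧e₂)·e₃ ≠ −φ'(e₃∧e₂)·e₁. Hence φ' defines no LATKe bracket. -/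
/-!
STATEMENT 17: Let u₁ = e₁₂+e₃₄, u₂ = −e₁₃+e₂₄, u₃ = e₁₄+e₂₃, u₄ = e₁₂−e₃₄,
u₅ = e₁₃+e₂₄, u₆ = e₁₄−e₂₃ (a basis of so(4,ℂ) exhibiting the splitting
sl(2,ℂ) × sl(2,ℂ)), and let φ′ : Λ²ℂ⁴ → so(4,ℂ) be φ followed by the
projection, in the basis u₁,…,u₆, that sets the u₄ and u₅ components to zero.
Then the trilinear map (u, v, w) ↦ φ′(u∧v)·w on ℂ⁴ is not totally
antisymmetric: φ′(e₁∧e₂)·e₃ ≠ −φ′(e₃∧e₂)·e₁.  Hence φ′ defines no LATKe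
bracket.
-/

open Matrix

/-- The defining values of the map `φ : Λ²ℂ⁴ → so(4,ℂ)` on the standard basis:
`φ(e₁∧e₂) = e₃₄`, `φ(e₁∧e₃) = −e₂₄`, `φ(e₁∧e₄) = e₂₃`, `φ(e₂∧e₃) = e₁₄`,
`φ(e₂∧e₄) = −e₁₃`, `φ(e₃∧e₄) = e₁₂`. -/
def PhiValues (φ : BilMat 4) : Prop :=
  φ (E 0) (E 1) = Eab 2 3 ∧ φ (E 0) (E 2) = -Eab 1 3 ∧ φ (E 0) (E 3) = Eab 1 2 ∧
  φ (E 1) (E 2) = Eab 0 3 ∧ φ (E 1) (E 3) = -Eab 0 2 ∧ φ (E 2) (E 3) = Eab 0 1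

/-- `u₄ = e₁₂ − e₃₄`. -/
noncomputable def u4 : Matrix (Fin 4) (Fin 4) ℂ := Eab 0 1 - Eab 2 3

/-- `u₅ = e₁₃ + e₂₄`. -/
noncomputable def u5 : Matrix (Fin 4) (Fin 4) ℂ := Eab 0 2 + Eab 1 3

/-- The `u₄`-component of an antisymmetric matrix `M = Σ cᵢ uᵢ`:
`c₄ = (M₁₂ − M₃₄)/2`. -/
noncomputable def c4 (M : Matrix (Fin 4) (Fin 4) ℂ) : ℂ := (M 0 1 - M 2 3) / 2

/-- The `u₅`-component of an antisymmetric matrix `M = Σ cᵢ uᵢ`: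
`c₅ = (M₁₃ + M₂₄)/2`. -/
noncomputable def c5 (M : Matrix (Fin 4) (Fin 4) ℂ) : ℂ := (M 0 2 + M 1 3) / 2

/-- The projection of `so(4,ℂ)` onto the span of `{u₁,u₂,u₃,u₆}` along
`{u₄,u₅}`: it sets the `u₄` and `u₅` components to zero. -/
noncomputable def proj (M : Matrix (Fin 4) (Fin 4) ℂ) : Matrix (Fin 4) (Fin 4) ℂ :=
  M - c4 M • u4 - c5 M • u5

/-- `φ′`, the composition of `φ` with the projection killing `u₄` and `u₅`. -/
noncomputable def phi' (φ : BilMat 4) (u v : Fin 4 → ℂ) :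
    Matrix (Fin 4) (Fin 4) ℂ :=
  proj (φ u v)

/-! Since `e₃₄ = (u₁ − u₄)/2`, the projection halves it: `φ′(e₁∧e₂) = u₁/2`, so
`φ′(e₁∧e₂)·e₃ = −e₄/2`. On the other hand `e₁₄ = (u₃ + u₆)/2` is fixed by the projection,
so `−φ′(e₃∧e₂)·e₁ = −e₁₄·e₁ = −e₄`. -/

theorem Eab_mulVec_E {n : ℕ} (a b c : Fin n) :
    Eab a b *ᵥ E c = (if b = c then E a else 0) - (if a = c then E b else 0) := by
  ext i
  by_cases hb : b = c <;> by_cases ha : a = c <;>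
    simp [Eab, E, Matrix.single_apply, Pi.single_apply, hb, ha, eq_comm]

theorem proj_eq_self {M : Matrix (Fin 4) (Fin 4) ℂ} (h4 : c4 M = 0) (h5 : c5 M = 0) :
    proj M = M := by
  simp [proj, h4, h5]

theorem proj_Eab_two_three : proj (Eab 2 3) = (1 / 2 : ℂ) • (Eab 0 1 + Eab 2 3) := by
  ext i j
  fin_cases i <;> fin_cases j <;> simp [proj, c4, c5, u4, u5, Eab] <;> norm_num

theorem proj_neg_Eab_zero_three : proj (-Eab 0 3) = -Eab 0 3 :=
  proj_eq_self (by simp [c4, Eab]) (by simp [c5, Eab])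

theorem phi'_not_antisymmetric (φ : BilMat 4)
    (halt : ∀ u : Fin 4 → ℂ, φ u u = 0) (hval : PhiValues φ) :
    (phi' φ (E 0) (E 1)).mulVec (E 2) ≠ -((phi' φ (E 2) (E 1)).mulVec (E 0)) := by
  obtain ⟨h01, -, -, h12, -, -⟩ := hval
  have h21 : φ (E 2) (E 1) = -Eab 0 3 := by
    rw [← LinearMap.IsAlt.neg halt, h12]
  have lhs : (phi' φ (E 0) (E 1)) *ᵥ E 2 = -(1 / 2 : ℂ) • E 3 := by
    rw [phi', h01, proj_Eab_two_three, smul_mulVec, add_mulVec, Eab_mulVec_E, Eab_mulVec_E]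
    simp
  have rhs : -((phi' φ (E 2) (E 1)) *ᵥ E 0) = -E 3 := by
    rw [phi', h21, proj_neg_Eab_zero_three, neg_mulVec, Eab_mulVec_E]
    simp
  rw [lhs, rhs]
  intro h
  have h3 := congrFun h 3
  norm_num [E] at h3
end
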